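/- In a half-full tree, the distance between any two leaves is at most 2·⌈log₂ l⌉, where l is the number of leaves. -/

import Mathlib

inductive BTree : Type
  | leaf : BTree
  | node : BTree → BTree → BTree
deriving DecidableEq

namespace BTree

/-- Number of leaves of a binary tree. -/
def leaves : BTree → ℕ
  | leaf => 1
  | node l r => leaves l + leaves r

/-- Depth (height) of a binary tree. -/
def depth : BTree → ℕ
  | leaf => 0
  | node l r => max (depth l) (depth r) + 1

/-- Number of internal (non-leaf) nodes. -/
def internals : BTree → ℕ
  | leaf => 0
  | node l r => internals l + internals r + 1

/-- A complete binary tree: full, with all leaves at the same depth. -/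
def IsComplete : BTree → Prop
  | leaf => True
  | node l r => IsComplete l ∧ IsComplete r ∧ depth l = depth r

/-- A half-full tree (haft): every non-leaf node has two children, and its
left child is the root of a complete subtree containing at least half of the
node's leaf-descendants. -/
def IsHaft : BTree → Prop
  | leaf => True
  | node l r => IsComplete l ∧ leaves r ≤ leaves l ∧ IsHaft r

end BTree

namespace BTree

/-- The subtree at a position given by a list of directions
(`false` = left, `true` = right). -/
def subtreeAt : BTree → List Bool → Option BTree
  | t, [] => some t
  | leaf, _ :: _ => none
  | node l _, false :: p => subtreeAt l p
  | node _ r, true :: p => subtreeAt r p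

/-- The node of `t` at position `p` is a primary root: it roots a complete
subtree, and its parent (if any) does not root a complete subtree. -/
def primaryAt (t : BTree) (p : List Bool) : Prop :=
  (∃ s, subtreeAt t p = some s ∧ IsComplete s) ∧
    ∀ q b, p = q ++ [b] → ∀ s', subtreeAt t q = some s' → ¬ IsComplete s'

end BTree

namespace BTree

/-- Length of the longest common prefix of two direction lists. -/
def lcp : List Bool → List Bool → ℕ
  | a :: p, b :: q => if a = b then lcp p q + 1 else 0
  | _, _ => 0

end BTree

namespace BTree

theorem leaves_pos (t : BTree) : 0 < t.leaves := by
  induction t with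
  | leaf => exact Nat.one_pos
  | node l r ihl _ => exact Nat.add_pos_left ihl _

theorem IsComplete.leaves_eq_two_pow_depth {t : BTree} (h : t.IsComplete) :
    t.leaves = 2 ^ t.depth := by
  induction t with
  | leaf => rfl
  | node l r ihl ihr =>
    obtain ⟨hl, hr, hd⟩ := h
    simp only [leaves, depth, ihl hl, ihr hr, hd, max_self, pow_succ]
    ring

/-- The left subtree of a haft root is complete with `2 ^ d` leaves, and holds at least half
of all leaves, so the root has depth `d + 1 = ⌈log₂ l⌉`. -/
theorem IsHaft.depth_le_clog_leaves {t : BTree} (h : t.IsHaft) :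
    t.depth ≤ Nat.clog 2 t.leaves := by
  induction t with
  | leaf => exact Nat.zero_le _
  | node l r _ ihr =>
    obtain ⟨hl, hrl, hr⟩ := h
    have hL := hl.leaves_eq_two_pow_depth
    have hl_lt : l.depth < Nat.clog 2 (l.leaves + r.leaves) := by
      rw [Nat.lt_clog_iff_pow_lt Nat.one_lt_two, ← hL]
      exact Nat.lt_add_of_pos_right r.leaves_pos
    have hr_le : r.depth ≤ l.depth :=
      calc r.depth ≤ Nat.clog 2 r.leaves := ihr hr
        _ ≤ Nat.clog 2 l.leaves := Nat.clog_mono_right _ hrl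
        _ = l.depth := by rw [hL, Nat.clog_pow _ _ Nat.one_lt_two]
    simp only [depth, leaves]
    omega

theorem length_le_depth_of_subtreeAt_eq_some {t s : BTree} {p : List Bool}
    (h : t.subtreeAt p = some s) : p.length ≤ t.depth := by
  induction t generalizing p with
  | leaf =>
    cases p with
    | nil => exact le_rfl
    | cons _ _ => simp [subtreeAt] at h
  | node l r ihl ihr =>
    match p, h with
    | [], _ => exact Nat.zero_le _
    | false :: p, h =>
      simpa [depth] using le_max_of_le_left (ihl h)
    | true :: p, h =>
      simpa [depth] using le_max_of_le_right (ihr h)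

end BTree

/-- In a haft with `l` leaves, the tree distance between any two leaves is at
most `2 ⌈log₂ l⌉`. -/
theorem haft_leaf_distance (t : BTree) (ht : t.IsHaft) (p q : List Bool)
    (hp : BTree.subtreeAt t p = some BTree.leaf)
    (hq : BTree.subtreeAt t q = some BTree.leaf) :
    (p.length - BTree.lcp p q) + (q.length - BTree.lcp p q) ≤
      2 * Nat.clog 2 t.leaves := by
  have hp_len := BTree.length_le_depth_of_subtreeAt_eq_some hp
  have hq_len := BTree.length_le_depth_of_subtreeAt_eq_some hq
  have h_depth := ht.depth_le_clog_leaves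
  omega
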